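/- arXiv:2204.06406 — 5 statements merged into one kernel-verified Lean document; each statement's English description precedes it below -/
import Mathlib

section
/- Let 0 < a < 1 and let m ≥ 2 be an integer. Let L_1, …, L_m > 0 and A_1, …, A_m > 0 be real numbers satisfying L_j^2 ≥ A_j(4πa − A_j) for all 1 ≤ j ≤ m. Then, setting L = L_1 + ⋯ + L_m and A = A_1 + ⋯ + A_m, the strict inequality L^2 > A(4πa − A) holds. -/
open Real

lemma sum_sq_le_sq_sum_aux (m : ℕ) (s : Finset (Fin m)) (f : Fin m → ℝ)
    (hf : ∀ j, 0 ≤ f j) : ∑ j ∈ s, f j ^ 2 ≤ (∑ j ∈ s, f j) ^ 2 := by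
  induction s using Finset.induction with
  | empty => simp
  | @insert a s hx ih =>
    rw [Finset.sum_insert hx, Finset.sum_insert hx]
    have hS : 0 ≤ ∑ j ∈ s, f j := Finset.sum_nonneg fun j _ => hf j
    nlinarith [hf a]

/-- **Superadditivity of the isoperimetric profile** (Lemma 2.4 of the paper).
If `0 < a < 1`, `m ≥ 2`, and positive reals `L j`, `A j` satisfy
`L j ^ 2 ≥ A j * (4πa - A j)` for every `j`, then the sums satisfy the strict
inequality `L ^ 2 > A * (4πa - A)`. -/
theorem sum_isoperimetric_strict
    (a : ℝ) (ha0 : 0 < a) (ha1 : a < 1)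
    (m : ℕ) (hm : 2 ≤ m)
    (L A : Fin m → ℝ)
    (hL : ∀ j, 0 < L j) (hA : ∀ j, 0 < A j)
    (h : ∀ j, (L j) ^ 2 ≥ A j * (4 * π * a - A j)) :
    (∑ j, L j) ^ 2 > (∑ j, A j) * (4 * π * a - ∑ j, A j) := by
  set c := 4 * π * a with hc
  -- sum the hypotheses
  have hsum : c * ∑ j, A j - ∑ j, A j ^ 2 ≤ ∑ j, L j ^ 2 := by
    have := Finset.sum_le_sum (fun j (_ : j ∈ Finset.univ) => h j)
    calc c * ∑ j, A j - ∑ j, A j ^ 2 = ∑ j, A j * (c - A j) := by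
          rw [Finset.mul_sum, ← Finset.sum_sub_distrib]
          congr 1; ext j; ring
      _ ≤ ∑ j, L j ^ 2 := this
  have hAsq : ∑ j, A j ^ 2 ≤ (∑ j, A j) ^ 2 :=
    sum_sq_le_sq_sum_aux m Finset.univ A fun j => (hA j).le
  -- strict inequality for L
  have hz : (0 : ℕ) < m := by omega
  have h1 : (1 : ℕ) < m := by omega
  set z : Fin m := ⟨0, hz⟩
  set o : Fin m := ⟨1, h1⟩
  have hzo : o ≠ z := by simp [z, o, Fin.ext_iff]
  have hmem : o ∈ Finset.univ.erase z := Finset.mem_erase.2 ⟨hzo, Finset.mem_univ o⟩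
  have hR : 0 < ∑ j ∈ Finset.univ.erase z, L j :=
    lt_of_lt_of_le (hL o)
      (Finset.single_le_sum (fun j _ => (hL j).le) hmem)
  have hRsq : ∑ j ∈ Finset.univ.erase z, L j ^ 2 ≤ (∑ j ∈ Finset.univ.erase z, L j) ^ 2 :=
    sum_sq_le_sq_sum_aux m _ L fun j => (hL j).le
  have hsplit : ∑ j, L j = L z + ∑ j ∈ Finset.univ.erase z, L j :=
    (Finset.add_sum_erase _ L (Finset.mem_univ z)).symm
  have hsplitsq : ∑ j, L j ^ 2 = L z ^ 2 + ∑ j ∈ Finset.univ.erase z, L j ^ 2 :=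
    (Finset.add_sum_erase _ (fun j => L j ^ 2) (Finset.mem_univ z)).symm
  have hLstrict : ∑ j, L j ^ 2 < (∑ j, L j) ^ 2 := by
    rw [hsplit, hsplitsq]
    nlinarith [hL z, hR, hRsq]
  nlinarith [hsum, hAsq, hLstrict]
end

section
/- Let 0 < a ≤ 1 and b ∈ (−π/2, π/2). The boundary curve of the cap U_{a,b}, namely v ↦ r(b, v) for v ∈ [0, 2π], has Euclidean length L = ∫₀^{2π} ‖∂_v r(b,v)‖ dv = 2πa cos(b), and the surface area of the cap is A = ∫₀^{2π} ∫_b^{π/2} a cos(u) du dv = 2πa(1 − sin(b)). These quantities satisfy the identity L² = A(4aπ − A). -/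
open Real

/-- The profile function `g(u) = ∫₀ᵘ √(1 - a² sin² t) dt`. -/
noncomputable def gProf (a u : ℝ) : ℝ :=
  ∫ t in (0:ℝ)..u, Real.sqrt (1 - a ^ 2 * Real.sin t ^ 2)

/-- The parametrization `r(u,v) = (g(u), a cos u cos v, a cos u sin v)` of the
surface of revolution `S_a ⊆ ℝ³`. -/
noncomputable def rSurf (a u v : ℝ) : EuclideanSpace ℝ (Fin 3) :=
  (WithLp.equiv 2 (Fin 3 → ℝ)).symm
    ![gProf a u, a * Real.cos u * Real.cos v, a * Real.cos u * Real.sin v]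

lemma rSurf_hasDerivAt (a b v : ℝ) :
    HasDerivAt (fun v' => rSurf a b v')
      ((PiLp.continuousLinearEquiv 2 ℝ (fun _ : Fin 3 => ℝ)).symm
        ![0, -(a * Real.cos b * Real.sin v), a * Real.cos b * Real.cos v]) v := by
  have hf : HasDerivAt
      (fun v' => ![gProf a b, a * Real.cos b * Real.cos v', a * Real.cos b * Real.sin v'] :
        ℝ → (Fin 3 → ℝ))
      ![0, -(a * Real.cos b * Real.sin v), a * Real.cos b * Real.cos v] v := by
    rw [hasDerivAt_pi]
    intro i
    fin_cases i
    · simpa using hasDerivAt_const v (gProf a b)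
    · simpa [mul_comm] using ((Real.hasDerivAt_cos v).const_mul (a * Real.cos b))
    · simpa [mul_comm] using ((Real.hasDerivAt_sin v).const_mul (a * Real.cos b))
  exact ((PiLp.continuousLinearEquiv 2 ℝ (fun _ : Fin 3 => ℝ)).symm.toContinuousLinearMap.hasFDerivAt.comp_hasDerivAt v hf)

/-- **Perimeter and area of the caps `U_{a,b}`** (Lemma 1.2 of the paper): for
`0 < a ≤ 1` and `b ∈ (-π/2, π/2)`, the boundary curve `v ↦ r(b,v)` of the cap
`U_{a,b}` has Euclidean length `L = ∫₀^{2π} ‖∂_v r(b,v)‖ dv = 2πa cos b`, the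
cap has area `A = ∫₀^{2π} ∫_b^{π/2} a cos u du dv = 2πa (1 - sin b)`, and these
quantities satisfy `L² = A (4aπ - A)`. -/
theorem cap_length_area_identity
    (a : ℝ) (ha0 : 0 < a) (ha1 : a ≤ 1)
    (b : ℝ) (hb : b ∈ Set.Ioo (-(π/2)) (π/2)) :
    (∫ v in (0:ℝ)..(2*π), ‖deriv (fun v' => rSurf a b v') v‖) = 2 * π * a * Real.cos b ∧
    (∫ v in (0:ℝ)..(2*π), ∫ u in b..(π/2), a * Real.cos u) = 2 * π * a * (1 - Real.sin b) ∧
    (2 * π * a * Real.cos b) ^ 2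
      = (2 * π * a * (1 - Real.sin b)) * (4 * a * π - 2 * π * a * (1 - Real.sin b)) := by
  have hcos : 0 ≤ Real.cos b := le_of_lt (Real.cos_pos_of_mem_Ioo hb)
  have hac : 0 ≤ a * Real.cos b := mul_nonneg ha0.le hcos
  have hnorm : ∀ v : ℝ, ‖deriv (fun v' => rSurf a b v') v‖ = a * Real.cos b := by
    intro v
    rw [(rSurf_hasDerivAt a b v).deriv]
    rw [EuclideanSpace.norm_eq]
    have : ∀ i : Fin 3,
        ‖((PiLp.continuousLinearEquiv 2 ℝ (fun _ : Fin 3 => ℝ)).symm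
          ![0, -(a * Real.cos b * Real.sin v), a * Real.cos b * Real.cos v] : EuclideanSpace ℝ (Fin 3)) i‖
        = |(![0, -(a * Real.cos b * Real.sin v), a * Real.cos b * Real.cos v] : Fin 3 → ℝ) i| := by
      intro i; rfl
    simp only [this, Fin.sum_univ_three, Matrix.cons_val_zero, Matrix.cons_val_one,
      Matrix.head_cons, Matrix.cons_val_two, Matrix.tail_cons, sq_abs]
    have h1 : (0:ℝ) ^ 2 + (-(a * Real.cos b * Real.sin v)) ^ 2
        + (a * Real.cos b * Real.cos v) ^ 2 = (a * Real.cos b) ^ 2 := by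
      nlinarith [Real.sin_sq_add_cos_sq v]
    rw [h1, Real.sqrt_sq hac]
  constructor
  · rw [intervalIntegral.integral_congr (g := fun _ => a * Real.cos b)
      (fun x _ => hnorm x), intervalIntegral.integral_const]
    simp [smul_eq_mul]; ring
  constructor
  · have hinner : ∀ v : ℝ, (∫ u in b..(π/2), a * Real.cos u) = a * (1 - Real.sin b) := by
      intro v
      rw [intervalIntegral.integral_const_mul, integral_cos, Real.sin_pi_div_two]
    rw [intervalIntegral.integral_congr (g := fun _ => a * (1 - Real.sin b))
      (fun x _ => hinner x), intervalIntegral.integral_const]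
    simp [smul_eq_mul]; ring
  · linear_combination (4 * π ^ 2 * a ^ 2) * Real.sin_sq_add_cos_sq b
end

section
/- For 0 < a ≤ 1 define q : [−π/2, π/2] × [0, 2π] → ℝ³ by q(u,v) = (sin(u), cos(u)cos(av), cos(u)sin(av)), whose image is contained in the unit sphere. Then for all u ∈ (−π/2, π/2) and v ∈ ℝ one has ⟨∂_u q, ∂_u q⟩ = 1, ⟨∂_u q, ∂_v q⟩ = 0 and ⟨∂_v q, ∂_v q⟩ = a² cos²(u), i.e. q has exactly the same first fundamental form du² + a² cos²(u) dv² as the parametrization r of S_a. Consequently, (u,v) ↦ (u, av) is an isometry from the half of S_a given by 0 ≤ v ≤ π onto the spherical lune Ω_a = {(sin ũ, cos ũ cos ṽ, cos ũ sin ṽ) : ũ ∈ [−π/2, π/2], ṽ ∈ [0, aπ]}, so that S_a is an isometric embedding of the double of the lune Ω_a. -/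
open Real
open scoped RealInnerProductSpace

/-- The reparametrized spherical map `q(u,v) = (sin u, cos u cos(av), cos u sin(av))`. -/
noncomputable def qLune (a u v : ℝ) : EuclideanSpace ℝ (Fin 3) :=
  (WithLp.equiv 2 (Fin 3 → ℝ)).symm
    ![Real.sin u, Real.cos u * Real.cos (a * v), Real.cos u * Real.sin (a * v)]

/-- The spherical lune `Ω_a ⊆ 𝕊²` of opening angle `aπ`. -/
noncomputable def lune (a : ℝ) : Set (EuclideanSpace ℝ (Fin 3)) :=
  (fun p : ℝ × ℝ => (WithLp.equiv 2 (Fin 3 → ℝ)).symm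
      ![Real.sin p.1, Real.cos p.1 * Real.cos p.2, Real.cos p.1 * Real.sin p.2]) ''
    (Set.Icc (-(π/2)) (π/2) ×ˢ Set.Icc 0 (a*π))

/-!
`q(u, v)` is the point of latitude `u` and longitude `w = a v` on the unit sphere. In the
coordinates `(u, w)` the sphere has first fundamental form `du² + cos² u dw²`, and the substitution
`w = a v` turns `dw²` into `a² dv²`. The half `0 ≤ v ≤ π` is carried by `v ↦ a v` onto the
longitudes `0 ≤ w ≤ aπ`, i.e. onto the lune.
-/

open Set

lemma HasDerivAt.withLp_equiv_symm {𝕜 ι : Type*} [NontriviallyNormedField 𝕜] [Fintype ι]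
    {p : ENNReal} [Fact (1 ≤ p)] {E : ι → Type*} [∀ i, NormedAddCommGroup (E i)]
    [∀ i, NormedSpace 𝕜 (E i)] {φ : 𝕜 → ∀ i, E i} {φ' : ∀ i, E i} {x : 𝕜}
    (h : HasDerivAt φ φ' x) :
    HasDerivAt (fun y => (WithLp.equiv p (∀ i, E i)).symm (φ y))
      ((WithLp.equiv p (∀ i, E i)).symm φ') x :=
  (PiLp.continuousLinearEquiv p 𝕜 E).symm.hasFDerivAt.comp_hasDerivAt x h

noncomputable def spherePoint (u w : ℝ) : EuclideanSpace ℝ (Fin 3) :=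
  (WithLp.equiv 2 (Fin 3 → ℝ)).symm ![sin u, cos u * cos w, cos u * sin w]

noncomputable def latTangent (u w : ℝ) : EuclideanSpace ℝ (Fin 3) :=
  (WithLp.equiv 2 (Fin 3 → ℝ)).symm ![cos u, -sin u * cos w, -sin u * sin w]

noncomputable def lonTangent (u w : ℝ) : EuclideanSpace ℝ (Fin 3) :=
  (WithLp.equiv 2 (Fin 3 → ℝ)).symm ![0, -cos u * sin w, cos u * cos w]

lemma norm_spherePoint (u w : ℝ) : ‖spherePoint u w‖ = 1 := by
  rw [EuclideanSpace.norm_eq, sqrt_eq_one]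
  simp [spherePoint, Fin.sum_univ_three]
  nlinarith [sin_sq_add_cos_sq u, sin_sq_add_cos_sq w]

lemma hasDerivAt_spherePoint_lat (u w : ℝ) :
    HasDerivAt (fun u' => spherePoint u' w) (latTangent u w) u := by
  refine HasDerivAt.withLp_equiv_symm (hasDerivAt_pi.2 fun i => ?_)
  fin_cases i
  · exact hasDerivAt_sin u
  · exact (hasDerivAt_cos u).mul_const _
  · exact (hasDerivAt_cos u).mul_const _

lemma hasDerivAt_spherePoint_lon (u w : ℝ) :
    HasDerivAt (spherePoint u) (lonTangent u w) w := by
  refine HasDerivAt.withLp_equiv_symm (hasDerivAt_pi.2 fun i => ?_)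
  fin_cases i
  · exact hasDerivAt_const w _
  · simpa [neg_mul, mul_neg] using (hasDerivAt_cos w).const_mul (cos u)
  · exact (hasDerivAt_sin w).const_mul (cos u)

section FirstFundamentalForm

variable (u w : ℝ)

lemma inner_latTangent_self : ⟪latTangent u w, latTangent u w⟫ = 1 := by
  simp [latTangent, EuclideanSpace.norm_sq_eq, Fin.sum_univ_three]
  nlinarith [sin_sq_add_cos_sq u, sin_sq_add_cos_sq w]

lemma inner_latTangent_lonTangent : ⟪latTangent u w, lonTangent u w⟫ = 0 := by
  simp [latTangent, lonTangent, PiLp.inner_apply, Fin.sum_univ_three]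
  ring

lemma inner_lonTangent_self : ⟪lonTangent u w, lonTangent u w⟫ = cos u ^ 2 := by
  simp [lonTangent, EuclideanSpace.norm_sq_eq, Fin.sum_univ_three]
  nlinarith [sin_sq_add_cos_sq w]

end FirstFundamentalForm

lemma deriv_qLune_fst (a u v : ℝ) :
    deriv (fun u' => qLune a u' v) u = latTangent u (a * v) :=
  (hasDerivAt_spherePoint_lat u (a * v)).deriv

lemma deriv_qLune_snd (a u v : ℝ) :
    deriv (fun v' => qLune a u v') v = a • lonTangent u (a * v) := by
  have hav : HasDerivAt (fun v' => a * v') a v := by simpa using (hasDerivAt_id v).const_mul a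
  exact ((hasDerivAt_spherePoint_lon u (a * v)).scomp v hav).deriv

lemma image_qLune_Icc_pi {a : ℝ} (ha : 0 ≤ a) :
    (fun p : ℝ × ℝ => qLune a p.1 p.2) '' (Icc (-(π/2)) (π/2) ×ˢ Icc 0 π) = lune a := by
  calc _ = (fun p : ℝ × ℝ => spherePoint p.1 p.2) ''
        ((fun p : ℝ × ℝ => (id p.1, a * p.2)) '' (Icc (-(π/2)) (π/2) ×ˢ Icc 0 π)) := by
        rw [image_image]; rfl
    _ = lune a := by
        rw [← prod_image_image_eq, image_id, image_mul_left_Icc ha pi_pos.le, mul_zero]; rfl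

theorem Sa_double_of_lune_general (a : ℝ) (ha0 : 0 < a) :
    (∀ u v : ℝ, qLune a u v ∈ Metric.sphere (0 : EuclideanSpace ℝ (Fin 3)) 1) ∧
    (∀ u ∈ Set.Ioo (-(π/2)) (π/2), ∀ v : ℝ,
      ⟪deriv (fun u' => qLune a u' v) u, deriv (fun u' => qLune a u' v) u⟫ = 1 ∧
      ⟪deriv (fun u' => qLune a u' v) u, deriv (fun v' => qLune a u v') v⟫ = 0 ∧
      ⟪deriv (fun v' => qLune a u v') v, deriv (fun v' => qLune a u v') v⟫
        = a ^ 2 * Real.cos u ^ 2) ∧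
    (fun p : ℝ × ℝ => qLune a p.1 p.2) '' (Set.Icc (-(π/2)) (π/2) ×ˢ Set.Icc 0 π)
      = lune a := by
  refine ⟨fun u v => mem_sphere_zero_iff_norm.2 (norm_spherePoint u (a * v)),
    fun u _ v => ?_, image_qLune_Icc_pi ha0.le⟩
  rw [deriv_qLune_fst, deriv_qLune_snd, inner_smul_right, inner_smul_left, inner_smul_right,
    inner_latTangent_self, inner_latTangent_lonTangent, inner_lonTangent_self]
  refine ⟨rfl, mul_zero a, ?_⟩
  simp only [conj_trivial]
  ring

/-- **`S_a` is the double of the lune `Ω_a`** (Lemma 1.2 iv) of the paper): for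
`0 < a ≤ 1`, the map `q(u,v) = (sin u, cos u cos(av), cos u sin(av))` takes
values in the unit sphere, has the same first fundamental form
`du² + a² cos²(u) dv²` as the parametrization `r` of `S_a`
(`⟨q_u,q_u⟩ = 1`, `⟨q_u,q_v⟩ = 0`, `⟨q_v,q_v⟩ = a² cos² u`), and maps the
half `0 ≤ v ≤ π` of the parameter domain onto the spherical lune `Ω_a`; hence
`(u,v) ↦ (u, av)` is an isometry from half of `S_a` onto `Ω_a`, and `S_a` is an
isometric embedding of the double of `Ω_a`. -/
theorem Sa_double_of_lune (a : ℝ) (ha0 : 0 < a) (ha1 : a ≤ 1) :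
    (∀ u v : ℝ, qLune a u v ∈ Metric.sphere (0 : EuclideanSpace ℝ (Fin 3)) 1) ∧
    (∀ u ∈ Set.Ioo (-(π/2)) (π/2), ∀ v : ℝ,
      ⟪deriv (fun u' => qLune a u' v) u, deriv (fun u' => qLune a u' v) u⟫ = 1 ∧
      ⟪deriv (fun u' => qLune a u' v) u, deriv (fun v' => qLune a u v') v⟫ = 0 ∧
      ⟪deriv (fun v' => qLune a u v') v, deriv (fun v' => qLune a u v') v⟫
        = a ^ 2 * Real.cos u ^ 2) ∧
    (fun p : ℝ × ℝ => qLune a p.1 p.2) '' (Set.Icc (-(π/2)) (π/2) ×ˢ Set.Icc 0 π)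
      = lune a :=
  Sa_double_of_lune_general a ha0
end

section
/- Let b₁ > 0, b₂ < 0 and c > 0 be real numbers with 2b₁ + 12 b₂ c² ≥ 0. Define K : [0, c] → ℝ by K(u) = (2b₁ + 4b₂u²)(2b₁ + 12b₂u²) / (1 + (2b₁u + 4b₂u³)²)². Then K is nonnegative and strictly decreasing on [0, c]: for all 0 ≤ u₁ < u₂ ≤ c one has K(u₁) > K(u₂) ≥ 0. -/
open Real

/-- **Monotonicity of the curvature of the smoothed tip** (key step in
Lemma 2.3 of the paper). Let `b₁ > 0`, `b₂ < 0` and `c > 0` with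
`2b₁ + 12b₂c² ≥ 0`, and let
`K(u) = (2b₁ + 4b₂u²)(2b₁ + 12b₂u²) / (1 + (2b₁u + 4b₂u³)²)²`
be the Gaussian curvature of the surface of revolution obtained by rotating
the graph of `w(u) = b₀ + b₁u² + b₂u⁴`. Then `K` is nonnegative and strictly
decreasing on `[0, c]`. -/
theorem smoothed_curvature_strict_anti
    (b₁ b₂ c : ℝ) (hb₁ : 0 < b₁) (hb₂ : b₂ < 0) (hc : 0 < c)
    (hnn : 0 ≤ 2 * b₁ + 12 * b₂ * c ^ 2)
    (K : ℝ → ℝ)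
    (hK : ∀ u, K u = (2 * b₁ + 4 * b₂ * u ^ 2) * (2 * b₁ + 12 * b₂ * u ^ 2)
        / (1 + (2 * b₁ * u + 4 * b₂ * u ^ 3) ^ 2) ^ 2) :
    ∀ u₁ u₂ : ℝ, 0 ≤ u₁ → u₁ < u₂ → u₂ ≤ c → K u₁ > K u₂ ∧ 0 ≤ K u₂ := by
  intro u₁ u₂ h0 h12 h2c
  have h1c : u₁ < c := lt_of_lt_of_le h12 h2c
  have h02 : 0 < u₂ := lt_of_le_of_lt h0 h12
  have hsq12 : u₁ ^ 2 < u₂ ^ 2 := by nlinarith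
  have hsq2c : u₂ ^ 2 ≤ c ^ 2 := by nlinarith
  have hsq1c : u₁ ^ 2 < c ^ 2 := by nlinarith
  -- second factor nonneg at u₂, first factor nonneg at u₂
  have hf2 : 0 ≤ 2 * b₁ + 12 * b₂ * u₂ ^ 2 := by nlinarith
  have hf1 : 0 ≤ 2 * b₁ + 4 * b₂ * u₂ ^ 2 := by nlinarith
  -- numerators
  set N₁ := (2 * b₁ + 4 * b₂ * u₁ ^ 2) * (2 * b₁ + 12 * b₂ * u₁ ^ 2) with hN₁
  set N₂ := (2 * b₁ + 4 * b₂ * u₂ ^ 2) * (2 * b₁ + 12 * b₂ * u₂ ^ 2) with hN₂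
  have hN₂nn : 0 ≤ N₂ := mul_nonneg hf1 hf2
  have hNlt : N₂ < N₁ := by
    have key : 0 < 2 * b₁ + 3 * b₂ * (u₁ ^ 2 + u₂ ^ 2) := by nlinarith
    nlinarith [mul_pos (sub_pos.mpr hsq12) key]
  -- derivative-profile function values
  have hfmono : 2 * b₁ * u₁ + 4 * b₂ * u₁ ^ 3 ≤ 2 * b₁ * u₂ + 4 * b₂ * u₂ ^ 3 := by
    have hs : u₁ ^ 2 + u₁ * u₂ + u₂ ^ 2 ≤ 3 * c ^ 2 := by
      nlinarith [mul_le_mul h1c.le h2c h02.le hc.le]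
    have key : 0 ≤ 2 * b₁ + 4 * b₂ * (u₁ ^ 2 + u₁ * u₂ + u₂ ^ 2) := by
      nlinarith [mul_nonneg (neg_nonneg.mpr hb₂.le) (sub_nonneg.mpr hs)]
    nlinarith [mul_nonneg (le_of_lt (sub_pos.mpr h12)) key]
  have hfac1 : 0 ≤ 2 * b₁ + 4 * b₂ * u₁ ^ 2 := by nlinarith
  have hfpos : 0 ≤ 2 * b₁ * u₁ + 4 * b₂ * u₁ ^ 3 := by
    nlinarith [mul_nonneg h0 hfac1]
  -- denominators
  set D₁ := (1 + (2 * b₁ * u₁ + 4 * b₂ * u₁ ^ 3) ^ 2) ^ 2 with hD₁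
  set D₂ := (1 + (2 * b₁ * u₂ + 4 * b₂ * u₂ ^ 3) ^ 2) ^ 2 with hD₂
  have hD₁pos : 0 < D₁ := by positivity
  have hD₂pos : 0 < D₂ := by positivity
  have hDle : D₁ ≤ D₂ := by
    have hsq : (2 * b₁ * u₁ + 4 * b₂ * u₁ ^ 3) ^ 2 ≤ (2 * b₁ * u₂ + 4 * b₂ * u₂ ^ 3) ^ 2 :=
      pow_le_pow_left₀ hfpos hfmono 2
    exact pow_le_pow_left₀ (by positivity) (by linarith) 2
  have hK1 : K u₁ = N₁ / D₁ := hK u₁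
  have hK2 : K u₂ = N₂ / D₂ := hK u₂
  constructor
  · rw [hK1, hK2]
    calc N₂ / D₂ ≤ N₂ / D₁ := by gcongr
    _ < N₁ / D₁ := by gcongr
  · rw [hK2]; positivity
end

section
/- Let 0 < a ≤ 1, u₀ ∈ [−π/2, π/2] and v₀ ∈ [0, 2π]. Then every continuously differentiable path γ : [0,1] → ℝ³ whose image is contained in S_a, with γ(0) = r(u₀, v₀) and γ(1) = (g(π/2), 0, 0) (the tip of S_a), has Euclidean length ∫₀¹ ‖γ'(t)‖ dt ≥ π/2 − u₀. Moreover, the meridian path t ↦ r(u₀ + t(π/2 − u₀), v₀) has length exactly π/2 − u₀. Consequently, the intrinsic (geodesic) distance on S_a from a point r(u,v) to the tip (g(π/2),0,0) equals π/2 − u, and the geodesic discs of S_a centered at the tip are precisely the caps U_{a,b}. -/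
/-!
The first coordinate of a point of `S_a` is `g(u)` and `g` is strictly increasing, so `u` is a
continuous function on `S_a`. Along a `C¹` path `γ = (x, y, z)` in `S_a` we have `x' = g'(u) u'`,
and the radius `ρ = a cos u = ‖(y, z)‖` satisfies `|ρ'| = |a sin u · u'| ≤ ‖(y', z')‖`; since
`g'(u)² + a² sin² u = 1` this gives `|u'| ≤ ‖γ'‖` wherever `u` is not at a pole. On a subinterval
where `u` crosses from its initial to its final value it stays off the poles, so integrating bounds
the length of `γ` below by the increase of `u`. Meridians have unit speed in `u`, so they attain
the bound.
-/

open Real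

/-- The surface `S_a ⊆ ℝ³`: the image of the parametrization `r`. -/
noncomputable def Ssurf (a : ℝ) : Set (EuclideanSpace ℝ (Fin 3)) :=
  (fun p : ℝ × ℝ => rSurf a p.1 p.2) '' (Set.Icc (-(π/2)) (π/2) ×ˢ Set.Icc 0 (2*π))

/-- The tip `(g(π/2), 0, 0)` of the surface `S_a`. -/
noncomputable def tip (a : ℝ) : EuclideanSpace ℝ (Fin 3) :=
  (WithLp.equiv 2 (Fin 3 → ℝ)).symm ![gProf a (π/2), 0, 0]

/-- `IsPathOn a γ p q` : `γ : [0,1] → ℝ³` is a continuously differentiable path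
whose image is contained in `S_a`, going from `p` to `q`. -/
def IsPathOn (a : ℝ) (γ : ℝ → EuclideanSpace ℝ (Fin 3))
    (p q : EuclideanSpace ℝ (Fin 3)) : Prop :=
  ContDiffOn ℝ 1 γ (Set.Icc 0 1) ∧ γ '' Set.Icc 0 1 ⊆ Ssurf a ∧ γ 0 = p ∧ γ 1 = q

/-- The Euclidean length `∫₀¹ ‖γ'(t)‖ dt` of a path `γ : [0,1] → ℝ³`. -/
noncomputable def pathLength (γ : ℝ → EuclideanSpace ℝ (Fin 3)) : ℝ :=
  ∫ t in (0:ℝ)..1, ‖derivWithin γ (Set.Icc 0 1) t‖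

/-- The intrinsic (geodesic) distance on `S_a` from `p` to the tip: the infimum
of Euclidean arc lengths of `C¹` paths joining `p` to the tip within `S_a`. -/
noncomputable def distToTip (a : ℝ) (p : EuclideanSpace ℝ (Fin 3)) : ℝ :=
  sInf {ℓ : ℝ | ∃ γ : ℝ → EuclideanSpace ℝ (Fin 3),
    IsPathOn a γ p (tip a) ∧ ℓ = pathLength γ}

open Set Filter Topology MeasureTheory intervalIntegral

theorem exists_cos_ne_zero_mem_Icc {u v : ℝ} (huv : u < v) : ∃ c ∈ Icc u v, cos c ≠ 0 := by
  by_cases hu : cos u = 0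
  · have hsin : sin u ≠ 0 := fun h => by simpa [h, hu] using sin_sq_add_cos_sq u
    set h := min (v - u) 1
    have hh : 0 < h := lt_min (sub_pos.2 huv) one_pos
    refine ⟨u + h, ⟨by linarith, by linarith [min_le_left (v - u) 1]⟩, ?_⟩
    rw [cos_add, hu, zero_mul, zero_sub, neg_ne_zero]
    exact mul_ne_zero hsin
      (sin_pos_of_pos_of_lt_pi hh ((min_le_right _ _).trans_lt (by linarith [pi_gt_three]))).ne'
  · exact ⟨u, left_mem_Icc.2 huv.le, hu⟩

theorem exists_Ioo_mapsTo_Ioo {f : ℝ → ℝ} {a b : ℝ} (hab : a ≤ b) (hf : ContinuousOn f (Icc a b))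
    (hlt : f a < f b) :
    ∃ s τ, a ≤ s ∧ s < τ ∧ τ ≤ b ∧ f s ≤ f a ∧ f b ≤ f τ ∧
      MapsTo f (Ioo s τ) (Ioo (f a) (f b)) := by
  set T := Icc a b ∩ f ⁻¹' Ici (f b)
  have hbT : b ∈ T := ⟨right_mem_Icc.2 hab, le_refl (f b)⟩
  have hTbdd : BddBelow T := ⟨a, fun t ht => ht.1.1⟩
  obtain ⟨⟨haτ, hτb⟩, hτ⟩ : sInf T ∈ T :=
    (hf.preimage_isClosed_of_isClosed isClosed_Icc isClosed_Ici).csInf_mem ⟨b, hbT⟩ hTbdd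
  set τ := sInf T
  set A := Icc a τ ∩ f ⁻¹' Iic (f a)
  have haA : a ∈ A := ⟨left_mem_Icc.2 haτ, le_refl (f a)⟩
  have hAbdd : BddAbove A := ⟨τ, fun t ht => ht.1.2⟩
  obtain ⟨⟨has, hsτ⟩, hs⟩ : sSup A ∈ A :=
    ((hf.mono (Icc_subset_Icc_right hτb)).preimage_isClosed_of_isClosed isClosed_Icc
      isClosed_Iic).csSup_mem ⟨a, haA⟩ hAbdd
  set s := sSup A
  have hsτ' : s < τ := hsτ.lt_of_ne fun h => by
    simp only [mem_preimage, mem_Iic, mem_Ici, h] at hs hτ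
    linarith
  refine ⟨s, τ, has, hsτ', hτb, hs, hτ, fun t ht => ⟨?_, ?_⟩⟩
  · by_contra! h
    exact (le_csSup hAbdd ⟨⟨has.trans ht.1.le, ht.2.le⟩, h⟩).not_gt ht.1
  · by_contra! h
    exact (csInf_le hTbdd ⟨⟨has.trans ht.1.le, ht.2.le.trans hτb⟩, h⟩).not_gt ht.2

theorem sub_le_integral_of_hasDerivAt_le_of_mem_Ioo {f f' g : ℝ → ℝ} {a b : ℝ} (hab : a ≤ b)
    (hf : ContinuousOn f (Icc a b)) (hg : ContinuousOn g (Icc a b)) (hg0 : ∀ t ∈ Icc a b, 0 ≤ g t)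
    (hderiv : ∀ t ∈ Ioo a b, f t ∈ Ioo (f a) (f b) → HasDerivAt f (f' t) t ∧ f' t ≤ g t) :
    f b - f a ≤ ∫ t in a..b, g t := by
  rcases le_or_gt (f b) (f a) with hle | hlt
  · exact (sub_nonpos.2 hle).trans (integral_nonneg hab hg0)
  obtain ⟨s, τ, has, hsτ, hτb, hs, hτ, hmaps⟩ := exists_Ioo_mapsTo_Ioo hab hf hlt
  have hsub : Icc s τ ⊆ Icc a b := Icc_subset_Icc has hτb
  have hderiv' : ∀ t ∈ Ioo s τ, HasDerivAt f (f' t) t ∧ f' t ≤ g t := fun t ht =>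
    hderiv t ⟨has.trans_lt ht.1, ht.2.trans_le hτb⟩ (hmaps ht)
  calc f b - f a ≤ f τ - f s := by linarith
    _ ≤ ∫ t in s..τ, g t :=
      sub_le_integral_of_hasDeriv_right_of_le hsτ.le (hf.mono hsub)
        (fun t ht => (hderiv' t ht).1.hasDerivWithinAt)
        ((hg.mono hsub).integrableOn_compact isCompact_Icc) (fun t ht => (hderiv' t ht).2)
    _ ≤ ∫ t in a..b, g t :=
      integral_mono_interval has hsτ.le hτb
        ((ae_restrict_iff' measurableSet_Ioc).2
          (ae_of_all _ fun t ht => hg0 t (Ioc_subset_Icc_self ht)))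
        (hg.intervalIntegrable_of_Icc hab)

theorem sq_le_sq_add_sq_of_mul_add_mul_eq {y z y' z' ρ ρ' : ℝ} (hρ : y ^ 2 + z ^ 2 = ρ ^ 2)
    (hρ' : y * y' + z * z' = ρ * ρ') (hρ0 : ρ ≠ 0) : ρ' ^ 2 ≤ y' ^ 2 + z' ^ 2 := by
  have hCS : (y * y' + z * z') ^ 2 ≤ (y ^ 2 + z ^ 2) * (y' ^ 2 + z' ^ 2) := by
    nlinarith [sq_nonneg (y * z' - z * y')]
  rw [hρ', hρ, mul_pow] at hCS
  exact le_of_mul_le_mul_left hCS (by positivity)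

noncomputable def gProfDeriv (a u : ℝ) : ℝ := √(1 - a ^ 2 * sin u ^ 2)

section Profile

variable {a : ℝ}

theorem continuous_gProfDeriv : Continuous (gProfDeriv a) := by
  unfold gProfDeriv; fun_prop

theorem gProfDeriv_periodic : Function.Periodic (gProfDeriv a) π := by
  intro u; simp [gProfDeriv, sin_add_pi]

theorem hasDerivAt_gProf (u : ℝ) : HasDerivAt (gProf a) (gProfDeriv a u) u :=
  integral_hasDerivAt_right (continuous_gProfDeriv.intervalIntegrable _ _)
    (continuous_gProfDeriv.stronglyMeasurableAtFilter _ _) continuous_gProfDeriv.continuousAt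

theorem contDiff_gProf : ContDiff ℝ 1 (gProf a) := by
  rw [contDiff_one_iff_deriv]
  refine ⟨fun u => (hasDerivAt_gProf u).differentiableAt, ?_⟩
  rw [show deriv (gProf a) = gProfDeriv a from funext fun u => (hasDerivAt_gProf u).deriv]
  exact continuous_gProfDeriv

theorem gProfDeriv_sq (ha : a ^ 2 ≤ 1) (u : ℝ) : gProfDeriv a u ^ 2 = 1 - a ^ 2 * sin u ^ 2 :=
  sq_sqrt (by nlinarith [sin_sq_le_one u, sq_nonneg (sin u)])

theorem gProfDeriv_pos (ha : a ^ 2 ≤ 1) {u : ℝ} (hu : cos u ≠ 0) : 0 < gProfDeriv a u := by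
  have : 0 < cos u ^ 2 := by positivity
  exact sqrt_pos.2 (by nlinarith [sin_sq_add_cos_sq u, sq_nonneg (sin u)])

theorem gProf_strictMono (ha : a ^ 2 ≤ 1) : StrictMono (gProf a) := by
  intro u v huv
  obtain ⟨c, hc, hcos⟩ := exists_cos_ne_zero_mem_Icc huv
  have hpos : 0 < ∫ t in u..v, gProfDeriv a t :=
    integral_pos huv continuous_gProfDeriv.continuousOn (fun t _ => sqrt_nonneg _)
      ⟨c, hc, gProfDeriv_pos ha hcos⟩
  rw [← integral_interval_sub_left (continuous_gProfDeriv.intervalIntegrable 0 v)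
    (continuous_gProfDeriv.intervalIntegrable 0 u)] at hpos
  exact sub_pos.1 hpos

theorem gProf_surjective (ha : a ^ 2 ≤ 1) : Function.Surjective (gProf a) := by
  have hπ : 0 < ∫ t in 0..π, gProfDeriv a t :=
    integral_pos pi_pos continuous_gProfDeriv.continuousOn (fun t _ => sqrt_nonneg _)
      ⟨0, left_mem_Icc.2 pi_pos.le, gProfDeriv_pos ha (by simp)⟩
  exact Continuous.surjective (contDiff_gProf.continuous)
    (gProfDeriv_periodic.tendsto_atTop_intervalIntegral_of_pos hπ pi_pos)
    (gProfDeriv_periodic.tendsto_atBot_intervalIntegral_of_pos hπ pi_pos)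

noncomputable def gProfOrderIso (ha : a ^ 2 ≤ 1) : ℝ ≃o ℝ :=
  (gProf_strictMono ha).orderIsoOfSurjective _ (gProf_surjective ha)

end Profile

section Surface

variable {a : ℝ}

theorem gProf_gProfOrderIso_symm (ha : a ^ 2 ≤ 1) (x : ℝ) :
    gProf a ((gProfOrderIso ha).symm x) = x :=
  (gProfOrderIso ha).apply_symm_apply x

theorem gProfOrderIso_symm_gProf (ha : a ^ 2 ≤ 1) (u : ℝ) :
    (gProfOrderIso ha).symm (gProf a u) = u :=
  (gProfOrderIso ha).symm_apply_apply u

/-- The parameter `u` of a point of `S_a`, read off from its first coordinate `g(u)`. -/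
noncomputable def latitude (ha : a ^ 2 ≤ 1) (p : EuclideanSpace ℝ (Fin 3)) : ℝ :=
  (gProfOrderIso ha).symm (p 0)

theorem latitude_rSurf (ha : a ^ 2 ≤ 1) (u v : ℝ) : latitude ha (rSurf a u v) = u :=
  gProfOrderIso_symm_gProf ha u

theorem rSurf_pi_div_two (v : ℝ) : rSurf a (π / 2) v = tip a := by
  simp [rSurf, tip]

theorem latitude_tip (ha : a ^ 2 ≤ 1) : latitude ha (tip a) = π / 2 := by
  rw [← rSurf_pi_div_two 0, latitude_rSurf]

theorem latitude_mem_Icc_and_sq_add_sq {p : EuclideanSpace ℝ (Fin 3)} (ha : a ^ 2 ≤ 1)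
    (hp : p ∈ Ssurf a) :
    latitude ha p ∈ Icc (-(π / 2)) (π / 2) ∧ p 1 ^ 2 + p 2 ^ 2 = (a * cos (latitude ha p)) ^ 2 := by
  obtain ⟨⟨u, v⟩, ⟨hu, -⟩, rfl⟩ := hp
  rw [latitude_rSurf]
  refine ⟨hu, ?_⟩
  simp only [rSurf, WithLp.equiv_symm_apply, Matrix.cons_val_one, Matrix.cons_val_zero,
    Matrix.cons_val]
  linear_combination (a * cos u) ^ 2 * sin_sq_add_cos_sq v

/-- `∂r/∂u`. -/
noncomputable def meridianTangent (a u v : ℝ) : EuclideanSpace ℝ (Fin 3) :=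
  (WithLp.equiv 2 (Fin 3 → ℝ)).symm ![gProfDeriv a u, -(a * sin u * cos v), -(a * sin u * sin v)]

theorem hasDerivAt_rSurf_meridian (u v : ℝ) :
    HasDerivAt (fun u => rSurf a u v) (meridianTangent a u v) u := by
  have hcoords : HasDerivAt (fun u => ![gProf a u, a * cos u * cos v, a * cos u * sin v])
      ![gProfDeriv a u, -(a * sin u * cos v), -(a * sin u * sin v)] u := by
    refine hasDerivAt_pi.2 fun i => ?_
    fin_cases i
    · exact hasDerivAt_gProf u
    · simpa using ((hasDerivAt_cos u).const_mul a).mul_const (cos v)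
    · simpa using ((hasDerivAt_cos u).const_mul a).mul_const (sin v)
  exact (PiLp.hasFDerivAt_toLp 2 _).comp_hasDerivAt u hcoords

theorem norm_meridianTangent (ha : a ^ 2 ≤ 1) (u v : ℝ) : ‖meridianTangent a u v‖ = 1 := by
  rw [EuclideanSpace.norm_eq, Fin.sum_univ_three, sqrt_eq_one]
  simp only [meridianTangent, Real.norm_eq_abs, sq_abs, WithLp.equiv_symm_apply,
    Matrix.cons_val_zero, Matrix.cons_val_one, Matrix.cons_val, even_two, Even.neg_pow]
  linear_combination gProfDeriv_sq ha u + (a * sin u) ^ 2 * sin_sq_add_cos_sq v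

theorem contDiff_rSurf_meridian (v : ℝ) : ContDiff ℝ 1 (fun u => rSurf a u v) :=
  contDiff_euclidean.2 fun i => by
    fin_cases i
    · exact contDiff_gProf
    · simp only [Fin.mk_one, rSurf, WithLp.equiv_symm_apply, Matrix.cons_val_one,
        Matrix.cons_val_zero]
      fun_prop
    · simp only [Fin.reduceFinMk, rSurf, WithLp.equiv_symm_apply, Matrix.cons_val]
      fun_prop

end Surface

section Paths

variable {a : ℝ}

theorem hasDerivAt_latitude_comp (ha : a ^ 2 ≤ 1) {γ : ℝ → EuclideanSpace ℝ (Fin 3)}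
    {V : EuclideanSpace ℝ (Fin 3)} {t : ℝ} (hγ : HasDerivAt γ V t)
    (hcos : cos (latitude ha (γ t)) ≠ 0) :
    HasDerivAt (fun s => latitude ha (γ s)) (V 0 / gProfDeriv a (latitude ha (γ t))) t := by
  have hx : HasDerivAt (fun s => γ s 0) (V 0) t :=
    (PiLp.hasFDerivAt_apply 2 (γ t) 0).comp_hasDerivAt t hγ
  have hinv := HasDerivAt.of_local_left_inverse (gProfOrderIso ha).symm.continuous.continuousAt
    (hasDerivAt_gProf _) (gProfDeriv_pos ha hcos).ne'
    (Eventually.of_forall (gProf_gProfOrderIso_symm ha))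
  rw [div_eq_inv_mul]
  exact hinv.comp t hx

theorem le_norm_of_hasDerivAt_latitude_comp (ha : a ^ 2 ≤ 1) (ha0 : a ≠ 0)
    {γ : ℝ → EuclideanSpace ℝ (Fin 3)} {V : EuclideanSpace ℝ (Fin 3)} {m t : ℝ}
    (hγ : HasDerivAt γ V t) (hS : ∀ᶠ s in 𝓝 t, γ s ∈ Ssurf a)
    (hcos : cos (latitude ha (γ t)) ≠ 0) (hu : HasDerivAt (fun s => latitude ha (γ s)) m t) :
    m ≤ ‖V‖ := by
  set w := latitude ha (γ t)
  have hcoord (i : Fin 3) : HasDerivAt (fun s => γ s i) (V i) t :=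
    (PiLp.hasFDerivAt_apply 2 (γ t) i).comp_hasDerivAt t hγ
  have hx : V 0 = gProfDeriv a w * m :=
    (hcoord 0).unique (((hasDerivAt_gProf w).comp t hu).congr_of_eventuallyEq
      (Eventually.of_forall fun s => (gProf_gProfOrderIso_symm ha (γ s 0)).symm))
  have hρ : HasDerivAt (fun s => a * cos (latitude ha (γ s))) (a * (-sin w * m)) t :=
    hu.cos.const_mul a
  have hq : HasDerivAt (fun s => γ s 1 ^ 2 + γ s 2 ^ 2) (2 * (γ t 1 * V 1 + γ t 2 * V 2)) t :=
    (((hcoord 1).fun_pow 2).add ((hcoord 2).fun_pow 2)).congr_deriv (by ring)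
  have hq' : HasDerivAt (fun s => γ s 1 ^ 2 + γ s 2 ^ 2)
      (2 * ((a * cos w) * (a * (-sin w * m)))) t := by
    refine ((hρ.pow 2).congr_of_eventuallyEq ?_).congr_deriv (by ring)
    filter_upwards [hS] with s hs using (latitude_mem_Icc_and_sq_add_sq ha hs).2
  have hyz := sq_le_sq_add_sq_of_mul_add_mul_eq
    (latitude_mem_Icc_and_sq_add_sq ha hS.self_of_nhds).2
    (mul_left_cancel₀ two_ne_zero (hq.unique hq')) (mul_ne_zero ha0 hcos)
  have hV : ‖V‖ ^ 2 = V 0 ^ 2 + V 1 ^ 2 + V 2 ^ 2 := by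
    simp [EuclideanSpace.norm_sq_eq, Fin.sum_univ_three, add_assoc]
  refine le_of_sq_le_sq ?_ (norm_nonneg V)
  calc m ^ 2 = (gProfDeriv a w * m) ^ 2 + (a * (-sin w * m)) ^ 2 := by
        linear_combination (-m ^ 2) * gProfDeriv_sq ha w
    _ ≤ ‖V‖ ^ 2 := by rw [hV, hx]; linarith

theorem latitude_sub_le_pathLength (ha : a ^ 2 ≤ 1) (ha0 : a ≠ 0)
    {γ : ℝ → EuclideanSpace ℝ (Fin 3)} {p q : EuclideanSpace ℝ (Fin 3)}
    (hγ : IsPathOn a γ p q) : latitude ha q - latitude ha p ≤ pathLength γ := by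
  obtain ⟨hγC1, hγS, rfl, rfl⟩ := hγ
  have hS : ∀ t ∈ Icc (0 : ℝ) 1, γ t ∈ Ssurf a := fun t ht => hγS (mem_image_of_mem γ ht)
  have hlat (t) (ht : t ∈ Icc (0 : ℝ) 1) := (latitude_mem_Icc_and_sq_add_sq ha (hS t ht)).1
  refine sub_le_integral_of_hasDerivAt_le_of_mem_Ioo (f := fun t => latitude ha (γ t))
    (f' := fun t => derivWithin γ (Icc 0 1) t 0 / gProfDeriv a (latitude ha (γ t))) zero_le_one
    ((gProfOrderIso ha).symm.continuous.comp_continuousOn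
      ((PiLp.continuous_apply 2 _ 0).comp_continuousOn hγC1.continuousOn))
    (hγC1.continuousOn_derivWithin (uniqueDiffOn_Icc zero_lt_one) le_rfl).norm
    (fun _ _ => norm_nonneg _) fun t ht hut => ?_
  have hnhds : Icc (0 : ℝ) 1 ∈ 𝓝 t := Icc_mem_nhds ht.1 ht.2
  have hγt : HasDerivAt γ (derivWithin γ (Icc 0 1) t) t := by
    rw [derivWithin_of_mem_nhds hnhds]
    exact ((hγC1.differentiableOn one_ne_zero).differentiableAt hnhds).hasDerivAt
  -- Strictly between its endpoint values the latitude avoids the poles `±π/2`.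
  have hcos : cos (latitude ha (γ t)) ≠ 0 :=
    (cos_pos_of_mem_Ioo ⟨((hlat 0 (left_mem_Icc.2 zero_le_one)).1.trans_lt hut.1),
      hut.2.trans_le (hlat 1 (right_mem_Icc.2 zero_le_one)).2⟩).ne'
  have hu := hasDerivAt_latitude_comp ha hγt hcos
  exact ⟨hu, le_norm_of_hasDerivAt_latitude_comp ha ha0 hγt (eventually_of_mem hnhds hS) hcos hu⟩

end Paths

section Distance

variable {a : ℝ}

theorem pathLength_rSurf_affine (ha : a ^ 2 ≤ 1) (u₀ L v₀ : ℝ) :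
    pathLength (fun t => rSurf a (u₀ + t * L) v₀) = |L| := by
  have hderiv (t : ℝ) : HasDerivAt (fun t => rSurf a (u₀ + t * L) v₀)
      (L • meridianTangent a (u₀ + t * L) v₀) t :=
    (hasDerivAt_rSurf_meridian _ v₀).scomp t ((hasDerivAt_mul_const L).const_add u₀)
  rw [pathLength, integral_congr (g := fun _ => |L|), intervalIntegral.integral_const, sub_zero,
    one_smul]
  intro t ht
  rw [uIcc_of_le zero_le_one] at ht
  dsimp only
  rw [(hderiv t).hasDerivWithinAt.derivWithin (uniqueDiffOn_Icc zero_lt_one t ht), norm_smul,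
    norm_meridianTangent ha, mul_one, Real.norm_eq_abs]

theorem isPathOn_meridian {u₀ v₀ : ℝ} (hu₀ : u₀ ∈ Icc (-(π / 2)) (π / 2))
    (hv₀ : v₀ ∈ Icc 0 (2 * π)) :
    IsPathOn a (fun t => rSurf a (u₀ + t * (π / 2 - u₀)) v₀) (rSurf a u₀ v₀) (tip a) := by
  refine ⟨((contDiff_rSurf_meridian v₀).comp (by fun_prop)).contDiffOn, ?_, by simp, ?_⟩
  · rintro _ ⟨t, ⟨ht0, ht1⟩, rfl⟩
    exact ⟨(u₀ + t * (π / 2 - u₀), v₀), ⟨⟨by nlinarith [hu₀.1, hu₀.2], by nlinarith [hu₀.2]⟩, hv₀⟩,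
      rfl⟩
  · simp only [one_mul, add_sub_cancel, rSurf_pi_div_two]

theorem distToTip_rSurf (ha : a ^ 2 ≤ 1) (ha0 : a ≠ 0) {u₀ v₀ : ℝ}
    (hu₀ : u₀ ∈ Icc (-(π / 2)) (π / 2)) (hv₀ : v₀ ∈ Icc 0 (2 * π)) :
    distToTip a (rSurf a u₀ v₀) = π / 2 - u₀ := by
  refine IsLeast.csInf_eq ⟨⟨_, isPathOn_meridian hu₀ hv₀, ?_⟩, ?_⟩
  · rw [pathLength_rSurf_affine ha, abs_of_nonneg (sub_nonneg.2 hu₀.2)]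
  · rintro _ ⟨γ, hγ, rfl⟩
    simpa only [latitude_tip, latitude_rSurf] using latitude_sub_le_pathLength ha ha0 hγ

theorem setOf_distToTip_le_eq_cap (ha : a ^ 2 ≤ 1) (ha0 : a ≠ 0) {b : ℝ} (hb : -(π / 2) ≤ b) :
    {p ∈ Ssurf a | distToTip a p ≤ π / 2 - b}
      = (fun p : ℝ × ℝ => rSurf a p.1 p.2) '' (Icc b (π / 2) ×ˢ Icc 0 (2 * π)) := by
  ext p
  constructor
  · rintro ⟨⟨⟨u, v⟩, ⟨hu, hv⟩, rfl⟩, hdist⟩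
    rw [distToTip_rSurf ha ha0 hu hv] at hdist
    exact ⟨(u, v), ⟨⟨by linarith, hu.2⟩, hv⟩, rfl⟩
  · rintro ⟨⟨u, v⟩, ⟨⟨hbu, hu⟩, hv⟩, rfl⟩
    have hu' : u ∈ Icc (-(π / 2)) (π / 2) := ⟨hb.trans hbu, hu⟩
    exact ⟨⟨(u, v), ⟨hu', hv⟩, rfl⟩, by rw [distToTip_rSurf ha ha0 hu' hv]; linarith⟩

end Distance

/-- **Intrinsic distance to the tip of `S_a`, and caps as geodesic discs**
(used in the Faber–Krahn theorem of the paper). For `0 < a ≤ 1`,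
`u₀ ∈ [-π/2, π/2]` and `v₀ ∈ [0, 2π]`: every `C¹` path in `S_a` from
`r(u₀,v₀)` to the tip `(g(π/2),0,0)` has Euclidean length at least
`π/2 - u₀`; the meridian path `t ↦ r(u₀ + t(π/2 - u₀), v₀)` has length
exactly `π/2 - u₀`; consequently the intrinsic distance from `r(u₀,v₀)` to
the tip equals `π/2 - u₀`, and the geodesic discs of `S_a` centered at the
tip are precisely the caps `U_{a,b}`. -/
theorem distance_to_tip_and_caps
    (a : ℝ) (ha0 : 0 < a) (ha1 : a ≤ 1) :
    (∀ u₀ ∈ Set.Icc (-(π/2)) (π/2), ∀ v₀ ∈ Set.Icc (0:ℝ) (2*π),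
      (∀ γ : ℝ → EuclideanSpace ℝ (Fin 3),
          IsPathOn a γ (rSurf a u₀ v₀) (tip a) → pathLength γ ≥ π/2 - u₀) ∧
      pathLength (fun t => rSurf a (u₀ + t * (π/2 - u₀)) v₀) = π/2 - u₀ ∧
      distToTip a (rSurf a u₀ v₀) = π/2 - u₀) ∧
    (∀ b ∈ Set.Ioo (-(π/2)) (π/2),
      {p ∈ Ssurf a | distToTip a p ≤ π/2 - b}
        = (fun p : ℝ × ℝ => rSurf a p.1 p.2) '' (Set.Icc b (π/2) ×ˢ Set.Icc 0 (2*π))) := by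
  have ha : a ^ 2 ≤ 1 := by nlinarith
  refine ⟨fun u₀ hu₀ v₀ hv₀ => ⟨fun γ hγ => ?_, ?_, distToTip_rSurf ha ha0.ne' hu₀ hv₀⟩,
    fun b hb => setOf_distToTip_le_eq_cap ha ha0.ne' hb.1.le⟩
  · simpa only [latitude_tip, latitude_rSurf] using latitude_sub_le_pathLength ha ha0.ne' hγ
  · rw [pathLength_rSurf_affine ha, abs_of_nonneg (sub_nonneg.2 hu₀.2)]
end
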